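/- Set τ := s − (u+γ_1), and let Ψ ∈ Mat_{p+q}(R) be the block matrix Ψ := [[(u+γ_1−(p/(p+q))s)·1_p, −τ·Z],[C, (−u−γ_1+(q/(p+q))s)·1_q]], where C is the q×p matrix with C_{ij} := −ξ_{ji}. Then det Ψ = (−1)^q Σ_{k=0}^{q} (u+γ_1−(p/(p+q))s)^{p−k} (u+γ_1−(q/(p+q))s)^{q−k} (s−(u+γ_1))^k γ_k. -/

import Mathlib

open Matrix BigOperators

noncomputable section

section DetAux

variable {A : Type*} [CommRing A]

/-- det of antidiagonal block matrix over `Fin k ⊕ Fin k`. -/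
theorem det_fromBlocks_antidiag {k : ℕ} (B C : Matrix (Fin k) (Fin k) A) :
    (Matrix.fromBlocks 0 B C 0).det = (-1) ^ k * B.det * C.det := by
  have h1 : (Matrix.fromBlocks (0 : Matrix (Fin k) (Fin k) A) 1 (-1) (0 : Matrix (Fin k) (Fin k) A))
      = Matrix.fromBlocks (1 : Matrix (Fin k) (Fin k) A) 1 0 1 * Matrix.fromBlocks 1 0 (-1) 1 * Matrix.fromBlocks 1 1 0 1 := by
    simp [Matrix.fromBlocks_multiply, Matrix.fromBlocks_inj]
  have h2 : (Matrix.fromBlocks (0 : Matrix (Fin k) (Fin k) A) 1 1 (0 : Matrix (Fin k) (Fin k) A))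
      = Matrix.fromBlocks (1 : Matrix (Fin k) (Fin k) A) 0 0 (-1) * Matrix.fromBlocks 0 1 (-1) 0 := by
    simp [Matrix.fromBlocks_multiply, Matrix.fromBlocks_inj]
  have h3 : (Matrix.fromBlocks (0 : Matrix (Fin k) (Fin k) A) B C (0 : Matrix (Fin k) (Fin k) A))
      = Matrix.fromBlocks B 0 0 C * Matrix.fromBlocks (0 : Matrix (Fin k) (Fin k) A) 1 1 0 := by
    simp [Matrix.fromBlocks_multiply, Matrix.fromBlocks_inj]
  have d1 : (Matrix.fromBlocks (0 : Matrix (Fin k) (Fin k) A) 1 (-1) (0 : Matrix (Fin k) (Fin k) A)).det = 1 := by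
    rw [h1]
    simp [Matrix.det_mul, Matrix.det_fromBlocks_zero₂₁, Matrix.det_fromBlocks_zero₁₂]
  have d2 : (Matrix.fromBlocks (0 : Matrix (Fin k) (Fin k) A) 1 1 (0 : Matrix (Fin k) (Fin k) A)).det = (-1) ^ k := by
    rw [h2, Matrix.det_mul, Matrix.det_fromBlocks_zero₂₁, d1]
    simp [Matrix.det_neg]
  rw [h3, Matrix.det_mul, d2, Matrix.det_fromBlocks_zero₂₁]
  ring


/-- det of an antidiagonal block matrix with blocks of different sizes vanishes. -/
theorem det_fromBlocks_antidiag_ne {α β : Type*} [Fintype α] [Fintype β] [DecidableEq α]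
    [DecidableEq β] (h : Fintype.card α ≠ Fintype.card β)
    (B : Matrix α β A) (C : Matrix β α A) :
    (Matrix.fromBlocks 0 B C 0).det = 0 := by
  rw [Matrix.det_apply]
  refine Finset.sum_eq_zero fun σ _ => ?_
  have : ∃ c, Matrix.fromBlocks (0 : Matrix α α A) B C 0 (σ c) c = 0 := by
    by_contra hc
    push_neg at hc
    have hg : ∀ a : α, ∃ b : β, σ (Sum.inl a) = Sum.inr b := by
      intro a
      rcases h' : σ (Sum.inl a) with a' | b
      · have := hc (Sum.inl a)
        rw [h'] at this
        simp at this
      · exact ⟨b, rfl⟩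
    have hh : ∀ b : β, ∃ a : α, σ (Sum.inr b) = Sum.inl a := by
      intro b
      rcases h' : σ (Sum.inr b) with a | b'
      · exact ⟨a, rfl⟩
      · have := hc (Sum.inr b)
        rw [h'] at this
        simp at this
    choose g hgspec using hg
    choose f hfspec using hh
    have hginj : Function.Injective g := by
      intro a a' haa
      have : Sum.inl a = Sum.inl a' := σ.injective (by rw [hgspec a, hgspec a', haa])
      simpa using this
    have hfinj : Function.Injective f := by
      intro b b' hbb
      have : Sum.inr b = Sum.inr b' := σ.injective (by rw [hfspec b, hfspec b', hbb])
      simpa using this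
    exact h (le_antisymm (Fintype.card_le_of_injective g hginj)
      (Fintype.card_le_of_injective f hfinj))
  obtain ⟨c, hc⟩ := this
  have hz : (∏ i, Matrix.fromBlocks (0 : Matrix α α A) B C 0 (σ i) i) = 0 :=
    Finset.prod_eq_zero (Finset.mem_univ c) hc
  rw [hz]
  simp

/-- Determinant of a matrix whose rows outside the range of an embedding are unit rows. -/
theorem det_eq_det_submatrix_of_unit_rows {n m : Type*} [Fintype n] [DecidableEq n]
    [Fintype m] [DecidableEq m] (M : Matrix n n A) (g : m ↪ n)
    (h : ∀ r, r ∉ Set.range g → ∀ c, M r c = if r = c then 1 else 0) :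
    M.det = (M.submatrix g g).det := by
  classical
  let e : {x // x ∈ Set.range g} ⊕ {x // x ∉ Set.range g} ≃ n := Equiv.sumCompl _
  have hd : M.det = (M.submatrix e e).det := (Matrix.det_submatrix_equiv_self e M).symm
  have hblock : M.submatrix e e =
      Matrix.fromBlocks (Matrix.of fun i j : {x // x ∈ Set.range ⇑g} => M i j)
        (Matrix.of fun (i : {x // x ∈ Set.range ⇑g}) (j : {x // x ∉ Set.range ⇑g}) => M i j)
        0 1 := by
    ext (i | i) (j | j)
    · rfl
    · rfl
    · simp only [Matrix.submatrix_apply, Matrix.fromBlocks_apply₂₁, e,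
        Equiv.sumCompl_apply_inr, Equiv.sumCompl_apply_inl]
      rw [h i.1 i.2, Matrix.zero_apply, if_neg]
      intro hh
      exact i.2 (hh ▸ j.2)
    · simp only [Matrix.submatrix_apply, Matrix.fromBlocks_apply₂₂, e,
        Equiv.sumCompl_apply_inr]
      rw [h i.1 i.2, Matrix.one_apply]
      simp [Subtype.ext_iff]
  rw [hd, hblock, Matrix.det_fromBlocks_zero₂₁, Matrix.det_one, mul_one]
  let e2 : m ≃ {x // x ∈ Set.range ⇑g} := Equiv.ofInjective g g.injective
  rw [← Matrix.det_submatrix_equiv_self e2]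
  congr 1


theorem det_fromBlocks_smul_one {p q : ℕ} (x y : A)
    (B : Matrix (Fin p) (Fin q) A) (C : Matrix (Fin q) (Fin p) A) :
    (Matrix.fromBlocks (x • (1 : Matrix (Fin p) (Fin p) A)) B C
        (y • (1 : Matrix (Fin q) (Fin q) A))).det =
      ∑ P : Finset (Fin p), ∑ Q : Finset (Fin q),
        if h : P.card = Q.card then
          x ^ (p - P.card) * y ^ (q - Q.card) * (-1) ^ P.card *
            (B.submatrix (P.orderEmbOfFin rfl) (Q.orderEmbOfFin h.symm)).det *
            (C.submatrix (Q.orderEmbOfFin h.symm) (P.orderEmbOfFin rfl)).det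
        else 0 := by
  classical
  set w : (Fin p ⊕ Fin q) → (Fin p ⊕ Fin q) → A := Matrix.fromBlocks 0 B C 0 with hw
  set scal : (Fin p ⊕ Fin q) → A := Sum.elim (fun _ => x) (fun _ => y) with hscal
  set uu : (Fin p ⊕ Fin q) → (Fin p ⊕ Fin q) → A := fun r => scal r • (Pi.single r (1 : A) : (Fin p ⊕ Fin q) → A) with huu
  have hM : Matrix.fromBlocks (x • (1 : Matrix (Fin p) (Fin p) A)) B C
      (y • (1 : Matrix (Fin q) (Fin q) A)) = w + uu := by
    funext r c
    change _ = w r c + uu r c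
    rcases r with i | i <;> rcases c with j | j <;>
      simp [hw, huu, hscal, Matrix.one_apply, Pi.single_apply, eq_comm, mul_comm] <;>
      · congr 1
        first
        | exact propext Sum.inl_injective.eq_iff.symm
        | exact propext Sum.inr_injective.eq_iff.symm
  rw [hM]
  have expand := (Matrix.detRowAlternating :
      ((Fin p ⊕ Fin q) → A) [⋀^(Fin p ⊕ Fin q)]→ₗ[A] A).toMultilinearMap.map_add_univ w uu
  have hdet : Matrix.det (w + uu : Matrix (Fin p ⊕ Fin q) (Fin p ⊕ Fin q) A) =
      ∑ S : Finset (Fin p ⊕ Fin q), (Matrix.detRowAlternating (S.piecewise w uu) : A) := expand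
  rw [hdet]
  -- per-S evaluation
  have key : ∀ S : Finset (Fin p ⊕ Fin q),
      (Matrix.detRowAlternating (S.piecewise w uu) : A) =
      (fun (P : Finset (Fin p)) (Q : Finset (Fin q)) =>
        if h : P.card = Q.card then
          x ^ (p - P.card) * y ^ (q - Q.card) * (-1) ^ P.card *
            (B.submatrix (P.orderEmbOfFin rfl) (Q.orderEmbOfFin h.symm)).det *
            (C.submatrix (Q.orderEmbOfFin h.symm) (P.orderEmbOfFin rfl)).det
        else 0) S.toLeft S.toRight := by
    intro S
    simp only []
    set mS : (Fin p ⊕ Fin q) → (Fin p ⊕ Fin q) → A := Sᶜ.piecewise (fun r => (Pi.single r (1 : A) : (Fin p ⊕ Fin q) → A)) w with hmS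
    have hpw : Sᶜ.piecewise uu w = Sᶜ.piecewise (fun r => scal r • mS r) mS := by
      funext r
      by_cases hr : r ∈ Sᶜ
      · rw [Finset.piecewise_eq_of_mem _ _ _ hr, Finset.piecewise_eq_of_mem _ _ _ hr,
          hmS, Finset.piecewise_eq_of_mem _ _ _ hr]
      · rw [Finset.piecewise_eq_of_notMem _ _ _ hr, Finset.piecewise_eq_of_notMem _ _ _ hr,
          hmS, Finset.piecewise_eq_of_notMem _ _ _ hr]
    have h0 : (Matrix.detRowAlternating (S.piecewise w uu) : A)
        = (∏ i ∈ Sᶜ, scal i) • Matrix.det (mS : Matrix (Fin p ⊕ Fin q) (Fin p ⊕ Fin q) A) := by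
      rw [← Finset.piecewise_compl S uu w, hpw]
      exact (Matrix.detRowAlternating :
        ((Fin p ⊕ Fin q) → A) [⋀^(Fin p ⊕ Fin q)]→ₗ[A] A).toMultilinearMap.map_piecewise_smul scal mS Sᶜ
    rw [h0]
    have hscalprod : (∏ i ∈ Sᶜ, scal i) = x ^ (p - S.toLeft.card) * y ^ (q - S.toRight.card) := by
      have hcompl : Sᶜ = (S.toLeftᶜ).disjSum (S.toRightᶜ) := by
        ext (a | a) <;> simp [Finset.mem_compl, Finset.inl_mem_disjSum, Finset.inr_mem_disjSum,
          Finset.mem_toLeft, Finset.mem_toRight]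
      rw [hcompl, Finset.prod_disjSum]
      simp [hscal, Finset.prod_const, Finset.card_compl]
    have hunit : ∀ r, r ∉ S → ∀ c, mS r c = if r = c then 1 else 0 := by
      intro r hr c
      rw [hmS, Finset.piecewise_eq_of_mem _ _ _ (Finset.mem_compl.2 hr), Pi.single_apply]
      simp [eq_comm]
    have hmem : ∀ r : Fin p ⊕ Fin q, r ∈ S → mS r = w r := by
      intro r hr
      rw [hmS, Finset.piecewise_eq_of_notMem _ _ _ (by simpa using hr)]
    have hsub : ∀ {k₁ k₂ : ℕ} (h₁ : S.toLeft.card = k₁) (h₂ : S.toRight.card = k₂),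
        Matrix.det (mS : Matrix (Fin p ⊕ Fin q) (Fin p ⊕ Fin q) A) =
        (Matrix.fromBlocks 0
          (B.submatrix (S.toLeft.orderEmbOfFin h₁) (S.toRight.orderEmbOfFin h₂))
          (C.submatrix (S.toRight.orderEmbOfFin h₂) (S.toLeft.orderEmbOfFin h₁)) 0).det := by
      intro k₁ k₂ h₁ h₂
      set e₁ := S.toLeft.orderEmbOfFin h₁ with he₁
      set e₂ := S.toRight.orderEmbOfFin h₂ with he₂
      set g : Fin k₁ ⊕ Fin k₂ ↪ (Fin p ⊕ Fin q) :=
        Function.Embedding.sumMap e₁.toEmbedding e₂.toEmbedding with hg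
      have hgl : ∀ b, g (Sum.inl b) = Sum.inl (e₁ b) := fun _ => rfl
      have hgr : ∀ b, g (Sum.inr b) = Sum.inr (e₂ b) := fun _ => rfl
      have hrange : ∀ r : Fin p ⊕ Fin q, r ∈ Set.range ⇑g ↔ r ∈ S := by
        rintro (a | a) <;> constructor
        · rintro ⟨(b | b), hb⟩
          · rw [hgl] at hb
            obtain rfl : e₁ b = a := by injection hb
            exact Finset.mem_toLeft.1 (Finset.orderEmbOfFin_mem _ h₁ b)
          · rw [hgr] at hb
            exact absurd hb (by simp)
        · intro ha
          have : a ∈ Set.range ⇑e₁ := by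
            rw [he₁, Finset.range_orderEmbOfFin]
            exact Finset.mem_toLeft.2 ha
          obtain ⟨b, hb⟩ := this
          exact ⟨Sum.inl b, by rw [hgl, hb]⟩
        · rintro ⟨(b | b), hb⟩
          · rw [hgl] at hb
            exact absurd hb (by simp)
          · rw [hgr] at hb
            obtain rfl : e₂ b = a := by injection hb
            exact Finset.mem_toRight.1 (Finset.orderEmbOfFin_mem _ h₂ b)
        · intro ha
          have : a ∈ Set.range ⇑e₂ := by
            rw [he₂, Finset.range_orderEmbOfFin]
            exact Finset.mem_toRight.2 ha
          obtain ⟨b, hb⟩ := this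
          exact ⟨Sum.inr b, by rw [hgr, hb]⟩
      have hred : Matrix.det (mS : Matrix (Fin p ⊕ Fin q) (Fin p ⊕ Fin q) A) = (Matrix.submatrix (mS : Matrix (Fin p ⊕ Fin q) (Fin p ⊕ Fin q) A) g g).det :=
        det_eq_det_submatrix_of_unit_rows _ g
          (fun r hr c => hunit r (fun hrs => hr ((hrange r).2 hrs)) c)
      have hsm : Matrix.submatrix (mS : Matrix (Fin p ⊕ Fin q) (Fin p ⊕ Fin q) A) g g =
          Matrix.fromBlocks 0 (B.submatrix e₁ e₂) (C.submatrix e₂ e₁) 0 := by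
        ext (r | r) (c | c) <;>
        · erw [Matrix.submatrix_apply, hmem _ ((hrange _).1 ⟨_, rfl⟩)]
          rfl
      rw [hred, hsm]
    by_cases h : S.toLeft.card = S.toRight.card
    · rw [dif_pos h, hscalprod, hsub rfl h.symm, det_fromBlocks_antidiag, smul_eq_mul]
      ring
    · rw [dif_neg h, hscalprod, hsub rfl rfl,
        det_fromBlocks_antidiag_ne (by simpa using h), smul_eq_mul, mul_zero]
  rw [Finset.sum_congr rfl (fun S _ => key S)]
  let E : Finset (Fin p ⊕ Fin q) ≃ Finset (Fin p) × Finset (Fin q) :=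
    { toFun := fun S => (S.toLeft, S.toRight)
      invFun := fun pq => pq.1.disjSum pq.2
      left_inv := fun S => Finset.toLeft_disjSum_toRight
      right_inv := fun pq => by simp }
  refine (Fintype.sum_equiv E _ (fun pq : Finset (Fin p) × Finset (Fin q) =>
    if h : pq.1.card = pq.2.card then
      x ^ (p - pq.1.card) * y ^ (q - pq.2.card) * (-1) ^ pq.1.card *
        (B.submatrix (pq.1.orderEmbOfFin rfl) (pq.2.orderEmbOfFin h.symm)).det *
        (C.submatrix (pq.2.orderEmbOfFin h.symm) (pq.1.orderEmbOfFin rfl)).det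
    else 0) (fun S => rfl)).trans (Fintype.sum_prod_type _)

end DetAux

section AuxLemmas

variable {A : Type*} [CommRing A]

/-- Regrouping a double sum over subsets with a cardinality-matching `dite` into a sum over
the common cardinality. -/
theorem regroup_sum {p q : ℕ} (hpq : q ≤ p)
    (f : ∀ (P : Finset (Fin p)) (Q : Finset (Fin q)), P.card = Q.card → A)
    (g : ∀ k : ℕ, {P : Finset (Fin p) // P.card = k} → {Q : Finset (Fin q) // Q.card = k} → A)
    (hfg : ∀ (k : ℕ), k ≤ q → ∀ (P : {P : Finset (Fin p) // P.card = k})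
      (Q : {Q : Finset (Fin q) // Q.card = k}),
      (if h : P.1.card = Q.1.card then f P.1 Q.1 h else 0) = g k P Q) :
    (∑ P : Finset (Fin p), ∑ Q : Finset (Fin q),
        if h : P.card = Q.card then f P Q h else 0) =
      ∑ k ∈ Finset.range (q + 1), ∑ P : {P : Finset (Fin p) // P.card = k},
        ∑ Q : {Q : Finset (Fin q) // Q.card = k}, g k P Q := by
  classical
  have hQcard : ∀ Q : Finset (Fin q), Q.card ≤ q := fun Q => by
    simpa using Finset.card_le_univ Q
  have hfib := Finset.sum_fiberwise_of_maps_to (s := (Finset.univ : Finset (Finset (Fin p)))) (g := fun P : Finset (Fin p) => P.card)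
    (t := Finset.range (p + 1))
    (fun P _ => Finset.mem_range.2 (Nat.lt_succ_of_le (by simpa using Finset.card_le_univ P)))
    (fun P => ∑ Q : Finset (Fin q), if h : P.card = Q.card then f P Q h else 0)
  rw [← hfib]
  rw [← Finset.sum_subset (Finset.range_subset_range.2 (by omega) :
      Finset.range (q + 1) ⊆ Finset.range (p + 1))]
  · refine Finset.sum_congr rfl fun k hk => ?_
    have hk' : k ≤ q := by simpa [Nat.lt_succ_iff] using hk
    have step1 : ∀ P ∈ Finset.univ.filter (fun P : Finset (Fin p) => P.card = k),
        (∑ Q : Finset (Fin q), if h : P.card = Q.card then f P Q h else 0) =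
        ∑ Q ∈ Finset.univ.filter (fun Q : Finset (Fin q) => Q.card = k),
          (if h : P.card = Q.card then f P Q h else 0) := by
      intro P hP
      have hPk : P.card = k := by simpa using hP
      symm
      refine Finset.sum_filter_of_ne fun Q _ hne => ?_
      by_contra hc
      exact hne (dif_neg fun h => hc (h.symm.trans hPk))
    rw [Finset.sum_congr rfl step1]
    rw [Finset.sum_subtype (p := fun P : Finset (Fin p) => P.card = k)
      (Finset.univ.filter (fun P : Finset (Fin p) => P.card = k))
      (by simp) (fun P => ∑ Q ∈ Finset.univ.filter (fun Q : Finset (Fin q) => Q.card = k),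
        (if h : P.card = Q.card then f P Q h else 0))]
    refine Finset.sum_congr rfl fun P _ => ?_
    rw [Finset.sum_subtype (p := fun Q : Finset (Fin q) => Q.card = k)
      (Finset.univ.filter (fun Q : Finset (Fin q) => Q.card = k))
      (by simp) (fun Q => (if h : P.1.card = Q.card then f P.1 Q h else 0))]
    exact Finset.sum_congr rfl fun Q _ => hfg k hk' P Q
  · intro k hk hnk
    have hk' : q < k := by
      simp only [Finset.mem_range, Nat.lt_succ_iff, not_le] at hnk
      omega
    refine Finset.sum_eq_zero fun P hP => Finset.sum_eq_zero fun Q _ => ?_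
    have hPk : P.card = k := by simpa using hP
    exact dif_neg fun h => absurd (h.symm.trans hPk) (by have := hQcard Q; omega)

end AuxLemmas


namespace Stmt2

/-! ### The polynomial ring `R` in the variables `z i j`, `ξ i j` (`i ∈ [p]`, `j ∈ [q]`),
`s`, `u` -/

abbrev Var (p q : ℕ) := (Fin p × Fin q) ⊕ ((Fin p × Fin q) ⊕ Bool)

abbrev R (p q : ℕ) := MvPolynomial (Var p q) ℂ

def zv (p q : ℕ) (i : Fin p) (j : Fin q) : R p q := MvPolynomial.X (Sum.inl (i, j))

def xiv (p q : ℕ) (i : Fin p) (j : Fin q) : R p q := MvPolynomial.X (Sum.inr (Sum.inl (i, j)))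

def sv (p q : ℕ) : R p q := MvPolynomial.X (Sum.inr (Sum.inr false))

def uv (p q : ℕ) : R p q := MvPolynomial.X (Sum.inr (Sum.inr true))

/-- the `p × q` matrix `Z` -/
def Zmat (p q : ℕ) : Matrix (Fin p) (Fin q) (R p q) := Matrix.of fun i j => zv p q i j

/-- the `q × p` matrix `C` with `C_{ij} = −ξ_{ji}` -/
def Cmat (p q : ℕ) : Matrix (Fin q) (Fin p) (R p q) := Matrix.of fun i j => -xiv p q j i

/-- `γ_k := Σ_{I⊆[p], J⊆[q], |I|=|J|=k} det(z^I_J)·det(ξ^I_J)` -/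
def gamma (p q k : ℕ) : R p q :=
  ∑ I : {I : Finset (Fin p) // I.card = k}, ∑ J : {J : Finset (Fin q) // J.card = k},
    ((Matrix.of fun i j => zv p q i j).submatrix (I.1.orderEmbOfFin I.2) (J.1.orderEmbOfFin J.2)).det *
      ((Matrix.of fun i j => xiv p q i j).submatrix (I.1.orderEmbOfFin I.2) (J.1.orderEmbOfFin J.2)).det

/-- `(p/(p+q))·s` -/
def psv (p q : ℕ) : R p q := MvPolynomial.C ((p : ℂ) / ((p : ℂ) + (q : ℂ))) * sv p q

/-- `(q/(p+q))·s` -/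
def qsv (p q : ℕ) : R p q := MvPolynomial.C ((q : ℂ) / ((p : ℂ) + (q : ℂ))) * sv p q

/-- `τ := s − (u + γ₁)` -/
def tau (p q : ℕ) : R p q := sv p q - (uv p q + gamma p q 1)

/-- `Ψ := [[(u+γ₁−(p/(p+q))s)·1_p, −τ·Z], [C, (−u−γ₁+(q/(p+q))s)·1_q]]` -/
def Psi (p q : ℕ) : Matrix (Fin p ⊕ Fin q) (Fin p ⊕ Fin q) (R p q) :=
  Matrix.fromBlocks ((uv p q + gamma p q 1 - psv p q) • 1) (-(tau p q • Zmat p q))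
    (Cmat p q) ((-uv p q - gamma p q 1 + qsv p q) • 1)

namespace Stmt2Aux

open Stmt2

theorem term_eq (p q : ℕ) {k : ℕ} (hk : k ≤ q) (P : Finset (Fin p)) (Q : Finset (Fin q))
    (hP : P.card = k) (hQ : Q.card = k) :
    (if h : P.card = Q.card then
        (uv p q + gamma p q 1 - psv p q) ^ (p - P.card) *
          (-uv p q - gamma p q 1 + qsv p q) ^ (q - Q.card) * (-1) ^ P.card *
          ((-(tau p q • Zmat p q)).submatrix (P.orderEmbOfFin rfl) (Q.orderEmbOfFin h.symm)).det *
          ((Cmat p q).submatrix (Q.orderEmbOfFin h.symm) (P.orderEmbOfFin rfl)).det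
      else 0) =
    (-1) ^ q * ((uv p q + gamma p q 1 - psv p q) ^ (p - k) *
        (uv p q + gamma p q 1 - qsv p q) ^ (q - k) * (sv p q - (uv p q + gamma p q 1)) ^ k *
      (((Matrix.of fun i j => zv p q i j).submatrix (P.orderEmbOfFin hP) (Q.orderEmbOfFin hQ)).det *
       ((Matrix.of fun i j => xiv p q i j).submatrix (P.orderEmbOfFin hP) (Q.orderEmbOfFin hQ)).det)) := by
  subst hP
  rw [dif_pos hQ.symm]
  have hB : (-(tau p q • Zmat p q)).submatrix (P.orderEmbOfFin rfl) (Q.orderEmbOfFin hQ) =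
      (-(tau p q)) •
        ((Matrix.of fun i j => zv p q i j).submatrix (P.orderEmbOfFin rfl) (Q.orderEmbOfFin hQ)) := by
    ext i j
    simp [Zmat]
  have hC : (Cmat p q).submatrix (Q.orderEmbOfFin hQ) (P.orderEmbOfFin rfl) =
      -(((Matrix.of fun i j => xiv p q i j).submatrix (P.orderEmbOfFin rfl)
          (Q.orderEmbOfFin hQ))ᵀ) := by
    ext i j
    simp [Cmat]
  rw [hB, hC, Matrix.det_smul, Matrix.det_neg, Matrix.det_transpose, hQ]
  simp only [Fintype.card_fin]
  have hy : (-uv p q - gamma p q 1 + qsv p q) = -(uv p q + gamma p q 1 - qsv p q) := by ring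
  have htau : tau p q = sv p q - (uv p q + gamma p q 1) := rfl
  rw [hy, htau]
  have hsign : ((-1 : R p q)) ^ (q - P.card) * (-1) ^ P.card * (-1) ^ P.card * (-1) ^ P.card
      = (-1) ^ q := by
    rw [← pow_add, ← pow_add, ← pow_add]
    have he : q - P.card + P.card + P.card + P.card = q + 2 * P.card := by omega
    rw [he, pow_add, pow_mul, neg_one_sq, one_pow, mul_one]
  rw [neg_pow (uv p q + gamma p q 1 - qsv p q), neg_pow (sv p q - (uv p q + gamma p q 1))]
  linear_combination ((uv p q + gamma p q 1 - psv p q) ^ (p - P.card) *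
      (uv p q + gamma p q 1 - qsv p q) ^ (q - P.card) *
      (sv p q - (uv p q + gamma p q 1)) ^ P.card *
      ((Matrix.of fun i j => zv p q i j).submatrix (⇑(P.orderEmbOfFin rfl)) (⇑(Q.orderEmbOfFin hQ))).det *
      ((Matrix.of fun i j => xiv p q i j).submatrix (⇑(P.orderEmbOfFin rfl)) (⇑(Q.orderEmbOfFin hQ))).det) * hsign

end Stmt2Aux

/-- `det Ψ = (−1)^q Σ_{k=0}^{q}
(u+γ₁−(p/(p+q))s)^{p−k} (u+γ₁−(q/(p+q))s)^{q−k} (s−(u+γ₁))^k γ_k`. -/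


theorem det_Psi (p q : ℕ) (hq : 1 ≤ q) (hpq : q ≤ p) :
    (Psi p q).det =
      (-1) ^ q * ∑ k ∈ Finset.range (q + 1),
        (uv p q + gamma p q 1 - psv p q) ^ (p - k) *
          (uv p q + gamma p q 1 - qsv p q) ^ (q - k) *
          (sv p q - (uv p q + gamma p q 1)) ^ k * gamma p q k := by
  classical
  rw [show Psi p q = Matrix.fromBlocks ((uv p q + gamma p q 1 - psv p q) • 1)
      (-(tau p q • Zmat p q)) (Cmat p q) ((-uv p q - gamma p q 1 + qsv p q) • 1) from rfl,
    det_fromBlocks_smul_one]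
  rw [regroup_sum hpq _
    (g := fun k (P : {P : Finset (Fin p) // P.card = k}) (Q : {Q : Finset (Fin q) // Q.card = k}) =>
      (-1) ^ q * ((uv p q + gamma p q 1 - psv p q) ^ (p - k) *
        (uv p q + gamma p q 1 - qsv p q) ^ (q - k) * (sv p q - (uv p q + gamma p q 1)) ^ k *
      (((Matrix.of fun i j => zv p q i j).submatrix (P.1.orderEmbOfFin P.2)
          (Q.1.orderEmbOfFin Q.2)).det *
       ((Matrix.of fun i j => xiv p q i j).submatrix (P.1.orderEmbOfFin P.2)
          (Q.1.orderEmbOfFin Q.2)).det)))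
    (fun k hk P Q => Stmt2Aux.term_eq p q hk P.1 Q.1 P.2 Q.2)]
  simp only [gamma, Finset.mul_sum]


end Stmt2
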